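/- Let μ be a nonatomic Borel probability measure on ℝ with cumulative distribution function F(x) = μ((−∞, x]), let β > 1, and for k ∈ ℤ define e_k : ℝ → ℝ by e_k(x) = √2·sin(2πkx) for k ≥ 1, e_0(x) = 1, e_k(x) = √2·cos(2π|k|x) for k ≤ −1, and set λ_k = 1/|k|^{2β} for k ≠ 0, λ_0 = 1. Then for every j ∈ ℤ and every x ∈ ℝ: ∫_ℝ (1 + Σ_{k=1}^∞ (2/k^{2β})·cos(2πk(F(x) − F(y))))·e_j(F(y)) dμ(y) = λ_j · e_j(F(x)). -/

import Mathlib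

open Real MeasureTheory

/-- The standard real Fourier basis on `[0,1]`:
`e_k(x) = √2·sin(2πkx)` for `k ≥ 1`, `e_0 = 1`, `e_k(x) = √2·cos(2π|k|x)` for `k ≤ -1`. -/
noncomputable def fourierBasisFun (k : ℤ) (x : ℝ) : ℝ :=
  if k = 0 then 1
  else if 0 < k then Real.sqrt 2 * Real.sin (2 * π * (k : ℝ) * x)
  else Real.sqrt 2 * Real.cos (2 * π * ((|k| : ℤ) : ℝ) * x)

/-- The eigenvalues `λ_k = 1/|k|^{2β}` for `k ≠ 0`, `λ_0 = 1`. -/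
noncomputable def lambdaCoeff (β : ℝ) (k : ℤ) : ℝ :=
  if k = 0 then 1 else 1 / (((|k| : ℤ) : ℝ)) ^ (2 * β)

/-!
Since `μ` has no atoms, `F = cdf μ` is continuous and pushes `μ` forward to Lebesgue measure on
`[0, 1]`, so the integral becomes `∫₀¹ K̄_β(c - u) e_j(u) du` with `c = F x`. For `j ≠ 0`,
`e_j(u) = √2 cos(2π|j|u - φ)` for a phase `φ`, so by the product-to-sum formula the `k`-th cosine
of the kernel integrates against `e_j` to `e_j(c)/2` if `k = |j|` and to `0` otherwise; the
coefficients `2/k^{2β}` are summable, which justifies integrating the kernel series termwise.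
-/

open Set ProbabilityTheory

namespace ProbabilityTheory

variable (μ : Measure ℝ) [IsProbabilityMeasure μ] [NullSingletonClass μ]

lemma continuous_cdf : Continuous (cdf μ) := by
  refine continuous_iff_continuousAt.2 fun x => ?_
  rw [(monotone_cdf μ).continuousAt_iff_leftLim_eq_rightLim, (cdf μ).rightLim_eq]
  have hjump := (cdf μ).measure_singleton x
  rw [measure_cdf, measure_singleton, eq_comm, ENNReal.ofReal_eq_zero] at hjump
  linarith [(monotone_cdf μ).leftLim_le (le_refl x)]

lemma measure_cdf_preimage_Iic {t : ℝ} (ht : t < 1) :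
    μ (cdf μ ⁻¹' Iic t) = ENNReal.ofReal t := by
  set S := cdf μ ⁻¹' Iic t
  obtain ⟨b, hb⟩ : ∃ b, t < cdf μ b :=
    ((tendsto_cdf_atTop μ).eventually (eventually_gt_nhds ht)).exists
  have hbdd : BddAbove S := ⟨b, fun y hy => ((monotone_cdf μ).reflect_lt (lt_of_le_of_lt hy hb)).le⟩
  rcases S.eq_empty_or_nonempty with hS | ⟨a, ha⟩
  · have : t ≤ 0 := by
      by_contra! h
      obtain ⟨y, hy⟩ := ((tendsto_cdf_atBot μ).eventually (eventually_lt_nhds h)).exists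
      exact hS.subset (show y ∈ S from hy.le)
    rw [hS, measure_empty, ENNReal.ofReal_of_nonpos this]
  · have hs : sSup S ∈ S := (isClosed_Iic.preimage (continuous_cdf μ)).csSup_mem ⟨a, ha⟩ hbdd
    have hS : S = Iic (sSup S) :=
      Subset.antisymm (fun y hy => le_csSup hbdd hy) fun y hy => (monotone_cdf μ hy).trans hs
    obtain ⟨s, hst⟩ : t ∈ range (cdf μ) :=
      intermediate_value_univ a b (continuous_cdf μ) ⟨ha, hb.le⟩
    have hcdf : cdf μ (sSup S) = t :=
      le_antisymm hs (hst ▸ monotone_cdf μ (le_csSup hbdd (show s ∈ S from hst.le)))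
    rw [hS, ← ofReal_cdf, hcdf]

lemma map_cdf_eq_restrict_Icc : μ.map (cdf μ) = volume.restrict (Icc 0 1) := by
  refine Measure.ext_of_Iic _ _ fun t => ?_
  have hinter : Iic t ∩ Icc 0 1 = Icc 0 (min t 1) := by
    ext y; simp only [mem_inter_iff, mem_Iic, mem_Icc, le_min_iff]; tauto
  rw [Measure.map_apply (monotone_cdf μ).measurable measurableSet_Iic,
    Measure.restrict_apply measurableSet_Iic, hinter, Real.volume_Icc, sub_zero]
  rcases lt_or_ge t 1 with ht | ht
  · rw [measure_cdf_preimage_Iic μ ht, min_eq_left ht.le]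
  · have huniv : cdf μ ⁻¹' Iic t = univ := eq_univ_of_forall fun y => (cdf_le_one μ y).trans ht
    rw [huniv, measure_univ, min_eq_right ht, ENNReal.ofReal_one]

lemma integral_comp_cdf {E : Type*} [NormedAddCommGroup E] [NormedSpace ℝ E] {g : ℝ → E}
    (hg : AEStronglyMeasurable g (volume.restrict (Icc 0 1))) :
    ∫ y, g (cdf μ y) ∂μ = ∫ u in (0 : ℝ)..1, g u := by
  rw [← map_cdf_eq_restrict_Icc μ] at hg
  rw [← integral_map (monotone_cdf μ).measurable.aemeasurable hg, map_cdf_eq_restrict_Icc,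
    integral_Icc_eq_integral_Ioc, intervalIntegral.integral_of_le zero_le_one]

end ProbabilityTheory

lemma integral_cos_add_two_pi_int_mul (a : ℝ) (k : ℤ) :
    ∫ u in (0 : ℝ)..1, cos (a + 2 * π * k * u) = if k = 0 then cos a else 0 := by
  split_ifs with hk
  · simp [hk]
  · have hc : 2 * π * k ≠ 0 := by have := pi_pos.ne'; simp [hk, this]
    rw [intervalIntegral.integral_comp_add_mul (fun x => cos x) hc, integral_cos, mul_zero,
      add_zero, mul_one, show 2 * π * k = k * (2 * π) by ring, sin_add_int_mul_two_pi, sub_self,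
      smul_zero]

lemma fourierBasisFun_zero (u : ℝ) : fourierBasisFun 0 u = 1 := if_pos rfl

lemma fourierBasisFun_eq_sqrt_two_mul_cos {j : ℤ} (hj : j ≠ 0) :
    ∃ φ, ∀ u, fourierBasisFun j u = √2 * cos (2 * π * j.natAbs * u - φ) := by
  rcases hj.lt_or_gt with hneg | hpos
  · exact ⟨0, fun u => by simp [fourierBasisFun, hj, hneg.not_gt, Nat.cast_natAbs]⟩
  · refine ⟨π / 2, fun u => ?_⟩
    simp [fourierBasisFun, hj, hpos, cos_sub_pi_div_two, Nat.cast_natAbs, abs_of_pos hpos]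

@[fun_prop]
lemma continuous_fourierBasisFun (j : ℤ) : Continuous (fourierBasisFun j) := by
  unfold fourierBasisFun
  split_ifs <;> fun_prop

lemma abs_fourierBasisFun_le (j : ℤ) (u : ℝ) : |fourierBasisFun j u| ≤ √2 := by
  rcases eq_or_ne j 0 with rfl | hj
  · simp [fourierBasisFun_zero, Real.one_lt_sqrt_two.le]
  · obtain ⟨φ, hφ⟩ := fourierBasisFun_eq_sqrt_two_mul_cos hj
    rw [hφ, abs_mul, abs_of_nonneg (sqrt_nonneg 2)]
    exact mul_le_of_le_one_right (sqrt_nonneg 2) (abs_cos_le_one _)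

lemma integral_fourierBasisFun (j : ℤ) :
    ∫ u in (0 : ℝ)..1, fourierBasisFun j u = if j = 0 then 1 else 0 := by
  rcases eq_or_ne j 0 with rfl | hj
  · simp [fourierBasisFun_zero]
  · obtain ⟨φ, hφ⟩ := fourierBasisFun_eq_sqrt_two_mul_cos hj
    have hshift : ∀ u : ℝ, 2 * π * j.natAbs * u - φ = -φ + 2 * π * ((j.natAbs : ℤ) : ℝ) * u :=
      fun u => by rw [Int.cast_natCast]; ring
    simp_rw [hφ, hshift]
    rw [intervalIntegral.integral_const_mul, integral_cos_add_two_pi_int_mul]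
    simp [hj]

lemma integral_cos_sub_mul_fourierBasisFun {m : ℕ} (hm : m ≠ 0) (j : ℤ) (c : ℝ) :
    ∫ u in (0 : ℝ)..1, cos (2 * π * m * (c - u)) * fourierBasisFun j u =
      if m = j.natAbs then fourierBasisFun j c / 2 else 0 := by
  rcases eq_or_ne j 0 with rfl | hj
  · have hshift : ∀ u : ℝ, 2 * π * m * (c - u) = 2 * π * m * c + 2 * π * ((-m : ℤ) : ℝ) * u :=
      fun u => by push_cast; ring
    simp_rw [fourierBasisFun_zero, mul_one, hshift, integral_cos_add_two_pi_int_mul]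
    simp [hm]
  · obtain ⟨φ, hφ⟩ := fourierBasisFun_eq_sqrt_two_mul_cos hj
    set n := j.natAbs
    have hprod : ∀ u : ℝ, cos (2 * π * m * (c - u)) * fourierBasisFun j u =
        √2 / 2 * (cos ((2 * π * m * c - φ) + 2 * π * ((n - m : ℤ) : ℝ) * u) +
          cos ((2 * π * m * c + φ) + 2 * π * ((-(m + n) : ℤ) : ℝ) * u)) := by
      intro u
      have hsum : 2 * π * m * (c - u) + (2 * π * n * u - φ) =
          2 * π * m * c - φ + 2 * π * ((n - m : ℤ) : ℝ) * u := by push_cast; ring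
      have hdiff : 2 * π * m * (c - u) - (2 * π * n * u - φ) =
          2 * π * m * c + φ + 2 * π * ((-(m + n) : ℤ) : ℝ) * u := by push_cast; ring
      rw [hφ, ← hsum, ← hdiff, cos_add (2 * π * m * (c - u)), cos_sub (2 * π * m * (c - u))]
      ring
    simp_rw [hprod]
    rw [intervalIntegral.integral_const_mul, intervalIntegral.integral_add
      (Continuous.intervalIntegrable (by fun_prop) _ _)
      (Continuous.intervalIntegrable (by fun_prop) _ _),
      integral_cos_add_two_pi_int_mul, integral_cos_add_two_pi_int_mul,
      if_neg (by omega : -((m : ℤ) + n) ≠ 0)]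
    by_cases hmn : m = n
    · rw [if_pos (by omega), if_pos hmn, hφ, hmn]
      ring
    · rw [if_neg (by omega), if_neg hmn]
      simp

/-- The covariance kernel `K̄_β` of the colored noise. -/
noncomputable def colorKernel (β u : ℝ) : ℝ :=
  1 + ∑' k : ℕ, 2 / ((k : ℝ) + 1) ^ (2 * β) * cos (2 * π * ((k : ℝ) + 1) * u)

section colorKernel

variable {β : ℝ}

lemma summable_two_div_succ_rpow (hβ : 1 < 2 * β) :
    Summable fun k : ℕ => 2 / ((k : ℝ) + 1) ^ (2 * β) := by
  have h := (summable_nat_add_iff 1).2 (Real.summable_one_div_nat_rpow.2 hβ)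
  simpa [Nat.cast_add, div_eq_mul_inv] using h.mul_left 2

lemma abs_two_div_succ_rpow_mul_cos_le (k : ℕ) (x : ℝ) :
    |2 / ((k : ℝ) + 1) ^ (2 * β) * cos x| ≤ 2 / ((k : ℝ) + 1) ^ (2 * β) := by
  rw [abs_mul, abs_of_nonneg (by positivity)]
  exact mul_le_of_le_one_right (by positivity) (abs_cos_le_one x)

lemma hasSum_colorKernel (hβ : 1 < 2 * β) (u : ℝ) :
    HasSum (fun k : ℕ => 2 / ((k : ℝ) + 1) ^ (2 * β) * cos (2 * π * ((k : ℝ) + 1) * u))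
      (colorKernel β u - 1) := by
  rw [colorKernel, add_sub_cancel_left]
  exact ((summable_two_div_succ_rpow hβ).of_norm_bounded
    fun k => abs_two_div_succ_rpow_mul_cos_le k _).hasSum

lemma continuous_colorKernel (hβ : 1 < 2 * β) : Continuous (colorKernel β) :=
  continuous_const.add <| continuous_tsum (fun k => by fun_prop) (summable_two_div_succ_rpow hβ)
    fun k u => abs_two_div_succ_rpow_mul_cos_le k _

lemma integral_colorKernel_mul_fourierBasisFun (hβ : 1 < 2 * β) (j : ℤ) (c : ℝ) :
    ∫ u in (0 : ℝ)..1, colorKernel β (c - u) * fourierBasisFun j u =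
      lambdaCoeff β j * fourierBasisFun j c := by
  set a : ℕ → ℝ := fun k => 2 / ((k : ℝ) + 1) ^ (2 * β)
  have hterm (k : ℕ) : ∫ u in (0 : ℝ)..1, a k * cos (2 * π * ((k : ℝ) + 1) * (c - u)) *
      fourierBasisFun j u = a k * if k + 1 = j.natAbs then fourierBasisFun j c / 2 else 0 := by
    have h := integral_cos_sub_mul_fourierBasisFun k.succ_ne_zero j c
    push_cast at h
    rw [← h, ← intervalIntegral.integral_const_mul]
    congr 1 with u
    ring
  have hseries : HasSum (fun k => a k * if k + 1 = j.natAbs then fourierBasisFun j c / 2 else 0)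
      (∫ u in (0 : ℝ)..1, (colorKernel β (c - u) - 1) * fourierBasisFun j u) := by
    simp_rw [← hterm]
    refine intervalIntegral.hasSum_integral_of_dominated_convergence (fun k _ => a k * √2)
      (fun k => Continuous.aestronglyMeasurable (by fun_prop))
      (fun k => ae_of_all _ fun u _ => ?_)
      (ae_of_all _ fun _ _ => (summable_two_div_succ_rpow hβ).mul_right _) intervalIntegrable_const
      (ae_of_all _ fun u _ => (hasSum_colorKernel hβ (c - u)).mul_right _)
    rw [Real.norm_eq_abs, abs_mul]
    exact mul_le_mul (abs_two_div_succ_rpow_mul_cos_le k _) (abs_fourierBasisFun_le j u)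
      (abs_nonneg _) (by positivity)
  have hsplit : ∫ u in (0 : ℝ)..1, colorKernel β (c - u) * fourierBasisFun j u =
      (∫ u in (0 : ℝ)..1, fourierBasisFun j u) +
        ∫ u in (0 : ℝ)..1, (colorKernel β (c - u) - 1) * fourierBasisFun j u := by
    have hK := continuous_colorKernel hβ
    rw [← intervalIntegral.integral_add (Continuous.intervalIntegrable (by fun_prop) _ _)
      (Continuous.intervalIntegrable (by fun_prop) _ _)]
    congr 1 with u
    ring
  rw [hsplit, integral_fourierBasisFun, ← hseries.tsum_eq]
  rcases eq_or_ne j 0 with rfl | hj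
  · simp [lambdaCoeff, fourierBasisFun_zero]
  · obtain ⟨n, hn⟩ := Nat.exists_eq_succ_of_ne_zero (Int.natAbs_ne_zero.2 hj)
    have habs : ((|j| : ℤ) : ℝ) = n + 1 := by rw [← Nat.cast_natAbs, hn]; push_cast; rfl
    rw [if_neg hj, zero_add, tsum_eq_single n fun k hk => by simp [hn, hk], if_pos hn.symm,
      lambdaCoeff, if_neg hj, habs]
    ring

end colorKernel

/-- `e_j ∘ F` is an eigenfunction with eigenvalue `λ_j` of the integral operator with
kernel `K̄_β(F(x) − F(y)) = 1 + Σ_k (2/k^{2β}) cos(2πk(F(x) − F(y)))` on `L²(μ)`,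
for a nonatomic Borel probability measure `μ` on `ℝ` with CDF `F` and `β > 1`. -/
theorem stmt_14 (μ : Measure ℝ) [IsProbabilityMeasure μ] [NullSingletonClass μ]
    (F : ℝ → ℝ) (hF : ∀ x, F x = (μ (Set.Iic x)).toReal)
    (β : ℝ) (hβ : 1 < β) (j : ℤ) (x : ℝ) :
    ∫ y, (1 + ∑' k : ℕ, 2 / ((k : ℝ) + 1) ^ (2 * β) *
          Real.cos (2 * π * ((k : ℝ) + 1) * (F x - F y))) * fourierBasisFun j (F y) ∂μ =
      lambdaCoeff β j * fourierBasisFun j (F x) := by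
  have hβ' : 1 < 2 * β := by linarith
  obtain rfl : F = cdf μ := funext fun y => by rw [hF, cdf_eq_real, measureReal_def]
  have hK := continuous_colorKernel hβ'
  exact (integral_comp_cdf μ (g := fun v => colorKernel β (cdf μ x - v) * fourierBasisFun j v)
    (by fun_prop)).trans (integral_colorKernel_mul_fourierBasisFun hβ' j _)
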